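/- arXiv:1712.06479 — 6 statements merged into one kernel-verified Lean document; each statement's English description precedes it below -/
import Mathlib

section
/- Let G : ℤ≥0 × ℤ≥0 → ℝ satisfy the recursion G(i,j) = max(G(i,j-1), G(i-1,j), G(i-1,j-1) + ω(i,j)) for i,j ≥ 1. Define I(i,j) = G(i,j) - G(i-1,j) and J(i,j) = G(i,j) - G(i,j-1). Then for all i,j ≥ 1: I(i,j) = max(ω(i,j), J(i-1,j), I(i,j-1)) - J(i-1,j) and J(i,j) = max(ω(i,j), J(i-1,j), I(i,j-1)) - I(i,j-1). -/
/-- Recursion for increments of the last passage time in the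
discrete Hammersley process. -/
theorem stmt0 (G w I J : ℕ × ℕ → ℝ)
    (hrec : ∀ i j : ℕ,
      G (i+1, j+1) = max (max (G (i+1, j)) (G (i, j+1))) (G (i, j) + w (i+1, j+1)))
    (hI : ∀ i j : ℕ, I (i+1, j) = G (i+1, j) - G (i, j))
    (hJ : ∀ i j : ℕ, J (i, j+1) = G (i, j+1) - G (i, j)) :
    ∀ i j : ℕ,
      I (i+1, j+1) = max (max (w (i+1, j+1)) (J (i, j+1))) (I (i+1, j)) - J (i, j+1) ∧
      J (i+1, j+1) = max (max (w (i+1, j+1)) (J (i, j+1))) (I (i+1, j)) - I (i+1, j) := by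
  have key : ∀ a x y d : ℝ,
      max (max a (y - d)) (x - d) = max (max x y) (d + a) - d := by
    intro a x y d
    rw [eq_sub_iff_add_eq, ← max_add_add_right, ← max_add_add_right, sub_add_cancel,
      sub_add_cancel, add_comm a d]
    ac_rfl
  intro i j
  constructor <;>
  · simp only [hI, hJ, hrec, key]
    ring
end

section
/- Let 0 < p < 1 and define ψ*(u) = -p(1-u)/(u + p(1-u)) for u ∈ (0,1]. Then for x ∈ [0,1], the Legendre-type transform inf_{0 < u ≤ 1} { x·u - ψ*(u) } = inf_{0 < u ≤ 1} { x·u + p(1-u)/(u+p(1-u)) } equals x if x ≤ p, and equals (1/(1-p))·(2√(xp) - p(x+1)) if p < x ≤ 1. -/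
lemma key_id (a b u : ℝ) (ha : 0 < a) (hb : 0 < b) (hb1 : b^2 < 1)
    (hu : 0 < u) (hu1 : u ≤ 1) :
    a^2*u + b^2*(1-u)/(u+b^2*(1-u))
      = (1/(1-b^2))*(2*(a*b) - b^2*(a^2+1))
        + (a*(u+b^2*(1-u)) - b)^2/((1-b^2)*(u+b^2*(1-u))) := by
  have hd : 0 < u + b^2*(1-u) := by nlinarith
  have h1 : (1:ℝ) - b^2 ≠ 0 := by nlinarith
  field_simp
  ring

/-- Explicit solution of the variational problem giving the shape function of
the discrete Hammersley process in direction `(x,1)`. -/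
theorem stmt3 (p x : ℝ) (hp : 0 < p) (hp1 : p < 1) (hx : x ∈ Set.Icc (0:ℝ) 1) :
    sInf ((fun u => x*u + p*(1-u)/(u+p*(1-u))) '' Set.Ioc (0:ℝ) 1)
      = if x ≤ p then x else (1/(1-p)) * (2*Real.sqrt (x*p) - p*(x+1)) := by
  obtain ⟨hx0, hx1⟩ := hx
  have hp1' : (0:ℝ) < 1 - p := by linarith
  split_ifs with hxp
  · -- case x ≤ p : min at u = 1
    apply IsLeast.csInf_eq
    constructor
    · exact ⟨1, by constructor <;> norm_num, by norm_num⟩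
    · rintro y ⟨u, ⟨hu0, hu1⟩, rfl⟩
      have hdu : 0 < u + p*(1-u) := by nlinarith
      have key : x*u + p*(1-u)/(u+p*(1-u)) - x
          = (1-u)*(p - x*(u+p*(1-u)))/(u+p*(1-u)) := by
        field_simp; ring
      have hd1 : u + p*(1-u) ≤ 1 := by nlinarith
      have h1 : x*(u+p*(1-u)) ≤ p := by
        nlinarith [mul_le_mul hxp hd1 hdu.le hp.le]
      have h2 : 0 ≤ (1-u)*(p - x*(u+p*(1-u)))/(u+p*(1-u)) :=
        div_nonneg (mul_nonneg (by linarith) (by linarith)) hdu.le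
      simp only []
      linarith [key]
  · -- case p < x
    have hpx : p < x := not_le.mp hxp
    have hx0' : 0 < x := lt_trans hp hpx
    set a := Real.sqrt x with ha_def
    set b := Real.sqrt p with hb_def
    have ha2 : a^2 = x := Real.sq_sqrt hx0'.le
    have hb2 : b^2 = p := Real.sq_sqrt hp.le
    have ha0 : 0 < a := Real.sqrt_pos.mpr hx0'
    have hb0 : 0 < b := Real.sqrt_pos.mpr hp
    have hb1 : b^2 < 1 := by rw [hb2]; exact hp1
    have hsq : Real.sqrt (x*p) = a*b := Real.sqrt_mul hx0'.le p
    rw [hsq]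
    have key : ∀ u, 0 < u → u ≤ 1 →
        x*u + p*(1-u)/(u+p*(1-u))
          = (1/(1-p))*(2*(a*b) - p*(x+1))
            + (a*(u+p*(1-u)) - b)^2/((1-p)*(u+p*(1-u))) := by
      intro u hu hu1
      have := key_id a b u ha0 hb0 hb1 hu hu1
      rw [ha2, hb2] at this
      exact this
    apply IsLeast.csInf_eq
    constructor
    · -- minimizer
      refine ⟨(a*b/x - p)/(1-p), ⟨?_, ?_⟩, ?_⟩
      · -- positivity: a*b > p*x
        have habsq : (a*b)^2 = x*p := by rw [mul_pow, ha2, hb2]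
        have h3 : p*x < a*b := by
          nlinarith [mul_pos ha0 hb0, mul_pos hp hx0', mul_pos (mul_pos hp hx0') (sub_pos.mpr (show p*x < 1 by nlinarith))]
        have : 0 < a*b/x - p := by
          rw [sub_pos, lt_div_iff₀ hx0']
          linarith [h3]
        positivity
      · -- ≤ 1 : a*b ≤ x
        have habsq : (a*b)^2 = x*p := by rw [mul_pow, ha2, hb2]
        have h4 : a*b ≤ x := by nlinarith [mul_pos ha0 hb0]
        rw [div_le_one hp1']
        have : a*b/x ≤ 1 := by rw [div_le_one hx0']; exact h4
        linarith
      · -- value equals target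
        set u := (a*b/x - p)/(1-p) with hu_def
        have hu0 : 0 < u := by
          have habsq : (a*b)^2 = x*p := by rw [mul_pow, ha2, hb2]
          have h3 : p*x < a*b := by
            nlinarith [mul_pos ha0 hb0, mul_pos hp hx0', mul_pos (mul_pos hp hx0') (sub_pos.mpr (show p*x < 1 by nlinarith))]
          have : 0 < a*b/x - p := by
            rw [sub_pos, lt_div_iff₀ hx0']; linarith
          positivity
        have hu1 : u ≤ 1 := by
          have habsq : (a*b)^2 = x*p := by rw [mul_pow, ha2, hb2]
          have h4 : a*b ≤ x := by nlinarith [mul_pos ha0 hb0]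
          rw [hu_def, div_le_one hp1']
          have : a*b/x ≤ 1 := by rw [div_le_one hx0']; exact h4
          linarith
        have hds : u + p*(1-u) = a*b/x := by
          rw [hu_def]; field_simp; ring
        have hzero : a*(u + p*(1-u)) - b = 0 := by
          rw [hds]
          field_simp
          linear_combination b * ha2
        simp only []
        rw [key u hu0 hu1, hzero]
        norm_num
    · rintro y ⟨u, ⟨hu0, hu1⟩, rfl⟩
      have hdu : 0 < u + p*(1-u) := by nlinarith
      simp only []
      rw [key u hu0 hu1]
      have : 0 ≤ (a*(u+p*(1-u)) - b)^2/((1-p)*(u+p*(1-u))) :=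
        div_nonneg (sq_nonneg _) (by positivity)
      linarith
end

section
/- Define g(s,t) as: g(s,t) = s if t ≥ s/p; g(s,t) = (1/(1-p))·(2√(pst) - p(t+s)) if ps ≤ t < s/p; g(s,t) = t if t ≤ ps, where 0 < p < 1. Then g is concave on [0,∞)². -/
/-!
The shape function is the lower envelope of the linear functions
`(l p s + t / l - p (t + s)) / (1 - p)`, `1 ≤ l ≤ 1 / p`: each of them dominates it on the
quadrant (by AM–GM in the middle region, `2 √(p s t) ≤ l p s + t / l`), and at every point one
of them touches it (`l = 1 / p`, `l = √(t / (p s))` and `l = 1` in the three regions).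
A pointwise minimum of concave functions is concave.
-/

open Real

theorem ConcaveOn.of_le_of_exists_eq {𝕜 E β ι : Type*} [Semiring 𝕜] [PartialOrder 𝕜]
    [AddCommMonoid E] [AddCommMonoid β] [PartialOrder β] [IsOrderedAddMonoid β]
    [SMul 𝕜 E] [SMulWithZero 𝕜 β] [PosSMulMono 𝕜 β]
    {s : Set E} {f : E → β} {h : ι → E → β} (hs : Convex 𝕜 s)
    (hh : ∀ i, ConcaveOn 𝕜 s (h i)) (hle : ∀ i, ∀ x ∈ s, f x ≤ h i x)
    (heq : ∀ x ∈ s, ∃ i, f x = h i x) : ConcaveOn 𝕜 s f := by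
  refine ⟨hs, fun x hx y hy a b ha hb hab => ?_⟩
  obtain ⟨i, hi⟩ := heq _ (hs hx hy ha hb hab)
  calc a • f x + b • f y ≤ a • h i x + b • h i y :=
        add_le_add (smul_le_smul_of_nonneg_left (hle i x hx) ha)
          (smul_le_smul_of_nonneg_left (hle i y hy) hb)
    _ ≤ h i (a • x + b • y) := (hh i).2 hx hy ha hb hab
    _ = f (a • x + b • y) := hi.symm

lemma two_sqrt_mul_le_add {l a b : ℝ} (hl : 0 < l) (ha : 0 ≤ a) (hb : 0 ≤ b) :
    2 * √(a * b) ≤ l * a + b / l := by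
  have key : l * (l * a + b / l - 2 * √(a * b)) = (l * √a - √b) ^ 2 := by
    rw [sqrt_mul ha]; field_simp; linear_combination (-l ^ 2) * sq_sqrt ha - sq_sqrt hb
  have := (mul_nonneg_iff_of_pos_left hl).1 (key ▸ sq_nonneg _)
  linarith

noncomputable def hammersleyShape (p s t : ℝ) : ℝ :=
  if s ≤ p * t then s
  else if p * s ≤ t then (1/(1-p)) * (2*√(p*s*t) - p*(t+s))
  else t

noncomputable def hammersleySupportLine (p l s t : ℝ) : ℝ :=
  (1/(1-p)) * (l*p*s + t/l - p*(t+s))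

section
variable {p l s t : ℝ}

lemma hammersleyShape_le_supportLine (hp : 0 < p) (hp1 : p < 1) (hl1 : 1 ≤ l) (hl2 : l ≤ 1/p)
    (hs : 0 ≤ s) (ht : 0 ≤ t) : hammersleyShape p s t ≤ hammersleySupportLine p l s t := by
  have hq : 0 < 1 - p := by linarith
  have hl0 : 0 < l := by linarith
  have hlp : l * p ≤ 1 := (le_div_iff₀ hp).mp hl2
  have htl : t / l * l = t := div_mul_cancel₀ t hl0.ne'
  rw [hammersleyShape, hammersleySupportLine]
  split_ifs with hst hts
  · have hsw : s ≤ t / l := by rw [le_div_iff₀ hl0]; nlinarith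
    rw [one_div_mul_eq_div, le_div_iff₀ hq]
    nlinarith [mul_nonneg (sub_nonneg.2 hlp) (sub_nonneg.2 hsw)]
  · gcongr
    linarith [two_sqrt_mul_le_add hl0 (mul_nonneg hp.le hs) ht]
  · have hwp : t / l ≤ p * s := by rw [div_le_iff₀ hl0]; nlinarith
    rw [one_div_mul_eq_div, le_div_iff₀ hq]
    nlinarith [mul_nonneg (sub_nonneg.2 hl1) (sub_nonneg.2 hwp)]

lemma exists_hammersleyShape_eq_supportLine (hp : 0 < p) (hp1 : p < 1) (ht : 0 ≤ t) :
    ∃ l ∈ Set.Icc 1 (1/p), hammersleyShape p s t = hammersleySupportLine p l s t := by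
  have hq : 0 < 1 - p := by linarith
  have hp1' : 1 ≤ 1 / p := by rw [le_div_iff₀ hp]; linarith
  rw [hammersleyShape]
  split_ifs with hst hts
  · refine ⟨1/p, ⟨hp1', le_rfl⟩, ?_⟩
    rw [hammersleySupportLine]; field_simp; ring
  · have hps : 0 < p * s := mul_pos hp (by nlinarith [mul_nonneg hp.le ht])
    have hu : 0 < √(p * s) := sqrt_pos.2 hps
    refine ⟨√t / √(p * s), ⟨?_, ?_⟩, ?_⟩
    · rw [le_div_iff₀ hu, one_mul]; exact sqrt_le_sqrt hts
    · rw [div_le_div_iff₀ hu hp, one_mul, le_sqrt (by positivity) hps.le, mul_pow, sq_sqrt ht]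
      nlinarith
    · have hv : 0 < √t := sqrt_pos.2 (by linarith)
      have hps_eq : √t / √(p * s) * p * s = √(p * s) * √t := by
        field_simp
        exact (sq_sqrt hps.le).symm
      have ht_eq : t / (√t / √(p * s)) = √(p * s) * √t := by
        field_simp
        exact (sq_sqrt ht).symm
      rw [hammersleySupportLine, sqrt_mul hps.le, hps_eq, ht_eq]
      ring
  · refine ⟨1, ⟨le_rfl, hp1'⟩, ?_⟩
    rw [hammersleySupportLine]; field_simp; ring

lemma concaveOn_hammersleySupportLine (S : Set (ℝ × ℝ)) (hS : Convex ℝ S) :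
    ConcaveOn ℝ S (fun q : ℝ × ℝ => hammersleySupportLine p l q.1 q.2) := by
  let L : ℝ × ℝ →ₗ[ℝ] ℝ :=
    ((l*p - p) / (1-p)) • LinearMap.fst ℝ ℝ ℝ + ((1/l - p) / (1-p)) • LinearMap.snd ℝ ℝ ℝ
  refine (L.concaveOn hS).congr fun q _ => ?_
  simp only [L, hammersleySupportLine, LinearMap.add_apply, LinearMap.smul_apply,
    LinearMap.fst_apply, LinearMap.snd_apply, smul_eq_mul]
  ring

end

theorem concaveOn_hammersleyShape {p : ℝ} (hp : 0 < p) (hp1 : p < 1) :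
    ConcaveOn ℝ (Set.Ici 0 ×ˢ Set.Ici 0) (fun q : ℝ × ℝ => hammersleyShape p q.1 q.2) :=
  .of_le_of_exists_eq ((convex_Ici 0).prod (convex_Ici 0))
    (h := fun (l : Set.Icc 1 (1/p)) q => hammersleySupportLine p l q.1 q.2)
    (fun _ => concaveOn_hammersleySupportLine _ ((convex_Ici 0).prod (convex_Ici 0)))
    (fun l _ hq => hammersleyShape_le_supportLine hp hp1 l.2.1 l.2.2 hq.1 hq.2)
    (fun _ hq => by
      obtain ⟨l, hl, heq⟩ := exists_hammersleyShape_eq_supportLine hp hp1 hq.2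
      exact ⟨⟨l, hl⟩, heq⟩)

/-- Concavity of the shape function of the discrete Hammersley process
with Bernoulli(p) bulk weights. -/
theorem stmt7 (p : ℝ) (hp : 0 < p) (hp1 : p < 1) (g : ℝ → ℝ → ℝ)
    (hg : ∀ s t : ℝ, 0 ≤ s → 0 ≤ t →
      g s t = if s ≤ p * t then s
        else if p * s ≤ t then (1/(1-p)) * (2*Real.sqrt (p*s*t) - p*(t+s))
        else t) :
    ConcaveOn ℝ (Set.Ici 0 ×ˢ Set.Ici 0) (fun q : ℝ × ℝ => g q.1 q.2) :=
  (concaveOn_hammersleyShape hp hp1).congr fun q hq => (hg q.1 q.2 hq.1 hq.2).symm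
end

section
/- Let 0 < u < 1, m,n ∈ ℕ, and let S be a Binomial(m,u) random variable and N a bounded random variable on the same probability space. Then lim_{ε→0} (1/ε)·Σ_{k=0}^{m} E[N | S = k]·( P{S_ε = k} - P{S = k} ) = Cov(N, S)/(u(1-u)), where S_ε ~ Binomial(m, u+ε). -/
open MeasureTheory Filter Finset Polynomial

/-!
Let `p_k(t)` be the Binomial(m, t) weight of `k` (the Bernstein polynomial
`bernsteinPolynomial ℝ m k`) and `I_k = ∫_{S = k} N = E[N | S = k] p_k(u)`. The ε-sum is the
difference quotient at `u` of `t ↦ ∑ₖ (I_k / p_k(u)) p_k(t)`, and the score identity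
`p_k'(u) = p_k(u) (k - m u) / (u (1 - u))` makes its derivative `∑ₖ (k - m u) I_k / (u (1 - u))`.
Splitting `Ω` along the level sets of `S` gives `Cov(N, S) = ∑ₖ (k - E[S]) I_k`, and
`E[S] = m u` is the binomial mean.
-/

theorem bernsteinPolynomial_eval (m k : ℕ) (t : ℝ) :
    (bernsteinPolynomial ℝ m k).eval t = m.choose k * t ^ k * (1 - t) ^ (m - k) := by
  simp [bernsteinPolynomial]

theorem sum_mul_bernsteinPolynomial_eval (m : ℕ) (t : ℝ) :
    ∑ k ∈ range (m + 1), (k : ℝ) * (bernsteinPolynomial ℝ m k).eval t = m * t := by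
  simpa [Polynomial.eval_finsetSum, nsmul_eq_mul] using
    congrArg (Polynomial.eval t) (bernsteinPolynomial.sum_smul (R := ℝ) m)

theorem hasDerivAt_bernsteinPolynomial_eval (m k : ℕ) {t : ℝ} (h0 : t ≠ 0) (h1 : t ≠ 1) :
    HasDerivAt (fun s => (bernsteinPolynomial ℝ m k).eval s)
      ((bernsteinPolynomial ℝ m k).eval t * ((k - m * t) / (t * (1 - t)))) t := by
  simp only [bernsteinPolynomial_eval]
  rcases lt_or_ge m k with hmk | hkm
  · simpa [Nat.choose_eq_zero_of_lt hmk] using hasDerivAt_const t (0 : ℝ)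
  obtain ⟨j, rfl⟩ := Nat.exists_eq_add_of_le hkm
  have h1' : 1 - t ≠ 0 := sub_ne_zero.mpr h1.symm
  have hpow := ((hasDerivAt_pow k t).fun_mul
    (((hasDerivAt_id' t).const_sub 1).fun_pow j)).const_mul ((k + j).choose k : ℝ)
  simp only [Nat.add_sub_cancel_left, ← mul_assoc] at hpow ⊢
  refine hpow.congr_deriv ?_
  push_cast
  rcases k with _ | k <;> rcases j with _ | j <;>
    simp only [Nat.cast_zero, Nat.cast_succ, Nat.add_sub_cancel, pow_zero, pow_succ] <;>
    field_simp <;> ring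

section PartitionByValue

variable {Ω : Type*} [MeasurableSpace Ω] {μ : Measure Ω} {S : Ω → ℕ} {m : ℕ}

theorem integral_mul_comp_eq_sum_setIntegral (hS : Measurable S) (hSle : ∀ x, S x ≤ m)
    {N : Ω → ℝ} (hN : Integrable N μ) (f : ℕ → ℝ) :
    ∫ x, N x * f (S x) ∂μ = ∑ k ∈ range (m + 1), f k * ∫ x in {x | S x = k}, N x ∂μ := by
  have hlevel : ∀ k, MeasurableSet {x | S x = k} := fun k => hS (measurableSet_singleton k)
  have hsplit : (fun x => N x * f (S x))
      = fun x => ∑ k ∈ range (m + 1), {x | S x = k}.indicator (fun x => f k * N x) x := by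
    funext x
    simp [Set.indicator_apply, mem_range_succ_iff.mpr (hSle x), mul_comm]
  rw [hsplit, integral_finsetSum _ fun k _ => (hN.const_mul (f k)).indicator (hlevel k)]
  simp only [integral_indicator (hlevel _), integral_const_mul]

theorem integral_mul_sub_integral_mul_integral_eq_sum (hS : Measurable S) (hSle : ∀ x, S x ≤ m)
    {N : Ω → ℝ} (hN : Integrable N μ) :
    ∫ x, N x * S x ∂μ - (∫ x, N x ∂μ) * ∫ x, (S x : ℝ) ∂μ
      = ∑ k ∈ range (m + 1), (k - ∫ x, (S x : ℝ) ∂μ) * ∫ x in {x | S x = k}, N x ∂μ := by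
  have hN1 := integral_mul_comp_eq_sum_setIntegral hS hSle hN fun _ => 1
  simp only [mul_one, one_mul] at hN1
  rw [integral_mul_comp_eq_sum_setIntegral hS hSle hN Nat.cast, hN1, mul_comm, mul_sum,
    ← sum_sub_distrib]
  simp only [sub_mul]

theorem setIntegral_div_measureReal_mul [IsFiniteMeasure μ] (s : Set Ω) (N : Ω → ℝ) :
    (∫ x in s, N x ∂μ) / μ.real s * μ.real s = ∫ x in s, N x ∂μ := by
  by_cases hs : μ.real s = 0
  · simp [Measure.restrict_eq_zero.mpr ((measureReal_eq_zero_iff).mp hs)]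
  · exact div_mul_cancel₀ _ hs

end PartitionByValue

/-- Derivative-in-parameter formula: the limit of the ε-difference of binomial
weights against conditional expectations equals `Cov(N,S)/(u(1-u))`. -/
theorem stmt9 {Ω : Type*} [MeasurableSpace Ω] (μ : Measure Ω) [IsProbabilityMeasure μ]
    (m : ℕ) (u : ℝ) (hu : u ∈ Set.Ioo (0:ℝ) 1)
    (S : Ω → ℕ) (hSmeas : Measurable S) (hSle : ∀ x, S x ≤ m)
    (hS : ∀ k : ℕ, μ {x | S x = k} = ENNReal.ofReal ((m.choose k : ℝ) * u^k * (1-u)^(m-k)))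
    (N : Ω → ℝ) (hN : Measurable N) (C : ℝ) (hbd : ∀ x, |N x| ≤ C) :
    Tendsto (fun ε : ℝ => ε⁻¹ * ∑ k ∈ Finset.range (m+1),
        ((∫ x in {x | S x = k}, N x ∂μ) / ((m.choose k : ℝ) * u^k * (1-u)^(m-k))) *
          ((m.choose k : ℝ) * (u+ε)^k * (1-u-ε)^(m-k)
            - (m.choose k : ℝ) * u^k * (1-u)^(m-k)))
      (nhdsWithin 0 (Set.Ioi 0))
      (nhds (((∫ x, N x * (S x : ℝ) ∂μ)
        - (∫ x, N x ∂μ) * (∫ x, (S x : ℝ) ∂μ)) / (u*(1-u)))) := by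
  obtain ⟨hu0, hu1⟩ := hu
  have hweight (k : ℕ) : μ.real {x | S x = k} = (bernsteinPolynomial ℝ m k).eval u := by
    have : 0 ≤ 1 - u := by linarith
    rw [measureReal_def, hS, bernsteinPolynomial_eval, ENNReal.toReal_ofReal (by positivity)]
  have hNint : Integrable N μ :=
    Integrable.of_bound hN.aestronglyMeasurable C (Eventually.of_forall hbd)
  have hmean : ∫ x, (S x : ℝ) ∂μ = m * u := by
    simpa [hweight, sum_mul_bernsteinPolynomial_eval] using
      integral_mul_comp_eq_sum_setIntegral hSmeas hSle (integrable_const (μ := μ) (1 : ℝ))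
        Nat.cast
  have hderiv := HasDerivAt.fun_sum fun k (_ : k ∈ range (m + 1)) =>
    (hasDerivAt_bernsteinPolynomial_eval m k hu0.ne' hu1.ne).const_mul
      ((∫ x in {x | S x = k}, N x ∂μ) / μ.real {x | S x = k})
  convert hderiv.tendsto_slope_zero_right using 2 with ε
  · simp only [hweight, bernsteinPolynomial_eval, smul_eq_mul, ← sum_sub_distrib, ← mul_sub,
      sub_sub]
  · rw [integral_mul_sub_integral_mul_integral_eq_sum hSmeas hSle hNint, hmean, sum_div]
    refine sum_congr rfl fun k _ => ?_
    rw [← hweight, ← mul_assoc, setIntegral_div_measureReal_mul]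
    ring
end

section
/- Fix 0 < u < 1 and 0 < p < 1. For s,t > 0, almost surely lim_{N→∞} G^(u)(⌊Ns⌋,⌊Nt⌋)/N = s·u + t·p(1-u)/(u + p(1-u)), where G^(u)(m,n) = Σ_{j=1}^{n} J(0,j) + Σ_{i=1}^{m} I(i,n), the J(0,j) are i.i.d. Bernoulli(p(1-u)/(u+p(1-u))) and, for each n, the (I(i,n))_{i≥1} are i.i.d. Bernoulli(u). -/
/-!
Up to the factor `1/N`, the last passage time is the sum of the `⌊Nt⌋` boundary weights `J` and of
the `⌊Ns⌋` weights `I` on row `⌊Nt⌋`. The row changes with `N`, so the strong law for a single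
sequence does not apply; instead, Hoeffding's inequality bounds the probability that either
normalised sum deviates from its mean by `ε` by `2 exp(-κ N)`, which is summable, and
Borel–Cantelli turns this into almost sure convergence.
-/

open MeasureTheory ProbabilityTheory Filter Real Topology

section

variable {Ω : Type*} [MeasurableSpace Ω] {μ : Measure Ω}

lemma integral_eq_measureReal_of_eq_zero_or_eq_one {X : Ω → ℝ} (hX : Measurable X)
    (h01 : ∀ ω, X ω = 0 ∨ X ω = 1) : ∫ ω, X ω ∂μ = μ.real {ω | X ω = 1} := by
  have hind : (X ⁻¹' {1}).indicator 1 = X := by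
    funext ω
    rcases h01 ω with h | h <;> simp [h]
  have h := integral_indicator_one (μ := μ) (hX (measurableSet_singleton 1))
  rwa [hind] at h

lemma ae_tendsto_zero_of_summable_measureReal [IsFiniteMeasure μ] {W : ℕ → Ω → ℝ}
    (h : ∀ ε > 0, Summable fun N => μ.real {ω | ε ≤ |W N ω|}) :
    ∀ᵐ ω ∂μ, Tendsto (W · ω) atTop (𝓝 0) := by
  have eventually_lt : ∀ k : ℕ, ∀ᵐ ω ∂μ, ∀ᶠ N in atTop, |W N ω| < 1 / (k + 1) := by
    intro k
    have htsum : ∑' N, μ {ω | 1 / ((k : ℝ) + 1) ≤ |W N ω|} ≠ ⊤ := by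
      rw [tsum_congr fun N => (ofReal_measureReal (μ := μ)).symm,
        ← ENNReal.ofReal_tsum_of_nonneg (fun _ => measureReal_nonneg) (h _ (by positivity))]
      exact ENNReal.ofReal_ne_top
    filter_upwards [ae_eventually_notMem htsum] with ω hω
    filter_upwards [hω] with N hN using not_le.1 hN
  filter_upwards [ae_all_iff.2 eventually_lt] with ω hω
  refine Metric.tendsto_nhds.2 fun δ hδ => ?_
  obtain ⟨k, hk⟩ := exists_nat_one_div_lt hδ
  filter_upwards [hω k] with N hN
  rw [Real.dist_eq, sub_zero]
  exact hN.trans hk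

variable [IsProbabilityMeasure μ]

/-- Hoeffding's inequality, stated with any `C ≥ n` so that it stays true for `n = 0`. -/
lemma measureReal_le_abs_sum_sub_integral_le {X : ℕ → Ω → ℝ} (hind : iIndepFun X μ)
    (hmeas : ∀ i, Measurable (X i)) (hX : ∀ i ω, X i ω ∈ Set.Icc (0 : ℝ) 1)
    {n : ℕ} {ε C : ℝ} (hε : 0 < ε) (hnC : (n : ℝ) ≤ C) :
    μ.real {ω | ε ≤ |∑ i ∈ Finset.range n, (X i ω - μ[X i])|}
      ≤ 2 * exp (-2 * ε ^ 2 / C) := by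
  rcases n.eq_zero_or_pos with rfl | hn
  · simp [not_le.2 hε]
    positivity
  set S : Ω → ℝ := fun ω => ∑ i ∈ Finset.range n, (X i ω - μ[X i])
  have hS : HasSubgaussianMGF S (n / 4) μ := by
    have hYind : iIndepFun (fun i ω => X i ω - μ[X i]) μ :=
      hind.comp (fun i (y : ℝ) => y - ∫ ω, X i ω ∂μ) fun i => measurable_id.sub_const _
    have h := HasSubgaussianMGF.sum_of_iIndepFun hYind (s := Finset.range n)
      fun i _ => hasSubgaussianMGF_of_mem_Icc (hmeas i).aemeasurable (ae_of_all _ (hX i))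
    convert h using 1
    simp only [Finset.sum_const, Finset.card_range, nsmul_eq_mul]
    norm_num [div_eq_mul_inv]
  have tail : ∀ Y : Ω → ℝ, HasSubgaussianMGF Y (n / 4) μ →
      μ.real {ω | ε ≤ Y ω} ≤ exp (-2 * ε ^ 2 / C) := fun Y hY => by
    refine (hY.measure_ge_le hε.le).trans (exp_le_exp.2 ?_)
    calc -ε ^ 2 / (2 * ((n / 4 : NNReal) : ℝ)) = -2 * ε ^ 2 / n := by push_cast; ring
      _ ≤ -2 * ε ^ 2 / C := by
        simp only [neg_mul, neg_div, neg_le_neg_iff]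
        exact div_le_div_of_nonneg_left (by positivity) (Nat.cast_pos.2 hn) hnC
  calc μ.real {ω | ε ≤ |S ω|}
      ≤ μ.real ({ω | ε ≤ S ω} ∪ {ω | ε ≤ (-S) ω}) :=
        measureReal_mono fun ω (hω : ε ≤ |S ω|) => le_abs.1 hω
    _ ≤ μ.real {ω | ε ≤ S ω} + μ.real {ω | ε ≤ (-S) ω} := measureReal_union_le _ _
    _ ≤ 2 * exp (-2 * ε ^ 2 / C) := by linarith [tail S hS, tail (-S) hS.neg]

theorem ae_tendsto_sum_range_div_of_mem_Icc {X : ℕ → ℕ → Ω → ℝ}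
    (hmeas : ∀ N i, Measurable (X N i)) (hind : ∀ N, iIndepFun (X N) μ)
    (hX : ∀ N i ω, X N i ω ∈ Set.Icc (0 : ℝ) 1) {q : ℝ} (hmean : ∀ N i, μ[X N i] = q)
    {m : ℕ → ℕ} {c L : ℝ} (hc : 0 < c) (hmc : ∀ N, (m N : ℝ) ≤ c * N)
    (hL : Tendsto (fun N => (m N : ℝ) / N) atTop (𝓝 L)) :
    ∀ᵐ ω ∂μ, Tendsto (fun N => (∑ i ∈ Finset.range (m N), X N i ω) / N) atTop (𝓝 (L * q)) := by
  set W : ℕ → Ω → ℝ := fun N ω => (∑ i ∈ Finset.range (m N), (X N i ω - q)) / N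
  have hdecomp : ∀ N ω, (∑ i ∈ Finset.range (m N), X N i ω) / N = W N ω + (m N : ℝ) / N * q := by
    intro N ω
    simp only [W, Finset.sum_sub_distrib, Finset.sum_const, Finset.card_range, nsmul_eq_mul]
    ring
  have htail : ∀ N, ∀ ε > 0, μ.real {ω | ε ≤ |W N ω|} ≤ 2 * exp (N * (-2 * ε ^ 2 / c)) := by
    intro N ε hε
    rcases N.eq_zero_or_pos with rfl | hN
    · simpa using measureReal_le_one.trans one_le_two
    have hN' : (0 : ℝ) < N := Nat.cast_pos.2 hN
    have hset : {ω | ε ≤ |W N ω|}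
        = {ω | ε * N ≤ |∑ i ∈ Finset.range (m N), (X N i ω - μ[X N i])|} := by
      ext ω
      simp only [Set.mem_ofPred_eq, W, hmean, abs_div, Nat.abs_cast, le_div_iff₀ hN']
    rw [hset]
    refine (measureReal_le_abs_sum_sub_integral_le (hind N) (hmeas N) (hX N) (by positivity)
      (hmc N)).trans_eq ?_
    congr 2
    field_simp
  have hW := ae_tendsto_zero_of_summable_measureReal (μ := μ) (W := W) fun ε hε =>
    .of_nonneg_of_le (fun _ => measureReal_nonneg) (fun N => htail N ε hε)
      ((Real.summable_exp_nat_mul_iff.2 (by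
        rw [neg_mul, neg_div]; exact neg_neg_of_pos (by positivity))).mul_left 2)
  filter_upwards [hW] with ω hω
  simp_rw [hdecomp]
  simpa using hω.add (hL.mul_const q)

end

lemma tendsto_natFloor_natCast_mul_div {a : ℝ} (ha : 0 ≤ a) :
    Tendsto (fun N : ℕ => (⌊(N : ℝ) * a⌋₊ : ℝ) / N) atTop (𝓝 a) := by
  simpa only [mul_comm, Function.comp_def] using
    (tendsto_nat_floor_mul_div_atTop ha).comp tendsto_natCast_atTop_atTop

/-- Law of large numbers for the boundary discrete Hammersley model, using the
increment decomposition of the last passage time along the west boundary and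
the top row. -/
theorem stmt10 {Ω : Type*} [MeasurableSpace Ω] (μ : Measure Ω) [IsProbabilityMeasure μ]
    (p u : ℝ) (hp : p ∈ Set.Ioo (0:ℝ) 1) (hu : u ∈ Set.Ioo (0:ℝ) 1)
    (J : ℕ → Ω → ℝ) (I : ℕ → ℕ → Ω → ℝ)
    (hJmeas : ∀ j, Measurable (J j)) (hImeas : ∀ i n, Measurable (I i n))
    (hJind : iIndepFun J μ)
    (hIind : ∀ n : ℕ, iIndepFun
      (fun i => I i n) μ)
    (hJ01 : ∀ j x, J j x = 0 ∨ J j x = 1)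
    (hI01 : ∀ i n x, I i n x = 0 ∨ I i n x = 1)
    (hJlaw : ∀ j, μ {x | J j x = 1} = ENNReal.ofReal (p*(1-u)/(u+p*(1-u))))
    (hIlaw : ∀ i n, μ {x | I i n x = 1} = ENNReal.ofReal u)
    (s t : ℝ) (hs : 0 < s) (ht : 0 < t) :
    ∀ᵐ x ∂μ, Tendsto (fun N : ℕ =>
        ((∑ j ∈ Finset.range ⌊(N:ℝ)*t⌋₊, J (j+1) x)
          + ∑ i ∈ Finset.range ⌊(N:ℝ)*s⌋₊, I (i+1) ⌊(N:ℝ)*t⌋₊ x) / (N:ℝ))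
      atTop (nhds (s*u + t*(p*(1-u)/(u+p*(1-u))))) := by
  obtain ⟨hp0, -⟩ := hp
  obtain ⟨hu0, hu1⟩ := hu
  have hq : 0 ≤ p*(1-u)/(u+p*(1-u)) := div_nonneg (by nlinarith) (by nlinarith)
  have mem_Icc : ∀ {y : ℝ}, y = 0 ∨ y = 1 → y ∈ Set.Icc (0:ℝ) 1 := by
    rintro y (rfl | rfl) <;> norm_num
  have mean : ∀ {Y : Ω → ℝ} {r : ℝ}, Measurable Y → (∀ x, Y x = 0 ∨ Y x = 1) → 0 ≤ r →
      μ {x | Y x = 1} = ENNReal.ofReal r → μ[Y] = r := fun hY h01 hr hlaw => by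
    rw [integral_eq_measureReal_of_eq_zero_or_eq_one hY h01, measureReal_def, hlaw,
      ENNReal.toReal_ofReal hr]
  have floor_le : ∀ {a : ℝ}, 0 < a → ∀ N : ℕ, (⌊(N:ℝ)*a⌋₊ : ℝ) ≤ a * N := fun ha N =>
    (Nat.floor_le (by positivity)).trans_eq (mul_comm _ _)
  have hJ := ae_tendsto_sum_range_div_of_mem_Icc (μ := μ) (X := fun _ j => J (j+1))
    (fun _ _ => hJmeas _) (fun _ => hJind.precomp Nat.succ_injective)
    (fun _ _ x => mem_Icc (hJ01 _ x)) (fun _ _ => mean (hJmeas _) (hJ01 _) hq (hJlaw _))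
    ht (floor_le ht) (tendsto_natFloor_natCast_mul_div ht.le)
  have hI := ae_tendsto_sum_range_div_of_mem_Icc (μ := μ) (X := fun N i => I (i+1) ⌊(N:ℝ)*t⌋₊)
    (fun _ _ => hImeas _ _) (fun _ => (hIind _).precomp Nat.succ_injective)
    (fun _ _ x => mem_Icc (hI01 _ _ x))
    (fun _ _ => mean (hImeas _ _) (hI01 _ _) hu0.le (hIlaw _ _))
    hs (floor_le hs) (tendsto_natFloor_natCast_mul_div hs.le)
  filter_upwards [hJ, hI] with x hJx hIx
  rw [add_comm (s*u)]
  exact (hJx.add hIx).congr fun N => (add_div _ _ _).symm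
end

section
/- Let W, N, E, S be real random variables satisfying W + N = S + E, with N independent of E and W independent of S. Then Var(W + N) = Var(W) - Var(N) + 2·Cov(S, N) and Var(W + N) = Var(S) - Var(E) + 2·Cov(E, W). -/
/-!
Always `Var[X + Y] = Var[X] - Var[Y] + 2 cov[X + Y, Y]`. If `X + Y = Z + T` with `Y` independent
of `T`, then `cov[X + Y, Y] = cov[Z, Y] + cov[T, Y] = cov[Z, Y]`. The two identities are this
with `(X, Y, Z, T) = (W, N, S, E)` and `(S, E, W, N)`.
-/

open MeasureTheory ProbabilityTheory

/-- Covariance of two real random variables. -/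
noncomputable def cov {Ω : Type*} [MeasurableSpace Ω] (μ : Measure Ω) (X Y : Ω → ℝ) : ℝ :=
  (∫ x, X x * Y x ∂μ) - (∫ x, X x ∂μ) * (∫ x, Y x ∂μ)

section

variable {Ω : Type*} [MeasurableSpace Ω] {μ : Measure Ω} {X Y Z T : Ω → ℝ}

lemma cov_eq_covariance [IsProbabilityMeasure μ] (hX : MemLp X 2 μ) (hY : MemLp Y 2 μ) :
    cov μ X Y = cov[X, Y; μ] :=
  (covariance_eq_sub hX hY).symm

lemma variance_add_eq_of_add_eq_add_of_indepFun [IsFiniteMeasure μ] (hX : MemLp X 2 μ)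
    (hY : MemLp Y 2 μ) (hZ : MemLp Z 2 μ) (hT : MemLp T 2 μ) (h : X + Y = Z + T)
    (hYT : IndepFun Y T μ) :
    Var[X + Y; μ] = Var[X; μ] - Var[Y; μ] + 2 * cov[Z, Y; μ] := by
  have hTY : cov[T, Y; μ] = 0 := hYT.symm.covariance_eq_zero hT hY
  have hZY : cov[Z, Y; μ] = cov[X, Y; μ] + Var[Y; μ] := by
    rw [← add_zero cov[Z, Y; μ], ← hTY, ← covariance_add_left hZ hT hY, ← h,
      covariance_add_left hX hY hY, covariance_self hY.aemeasurable]
  rw [variance_add hX hY, hZY]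
  ring

end

theorem stmt13_general {Ω : Type*} [MeasurableSpace Ω] (μ : Measure Ω) [IsProbabilityMeasure μ]
    (W N E S : Ω → ℝ)
    (hW : MemLp W 2 μ) (hN : MemLp N 2 μ) (hE : MemLp E 2 μ) (hS : MemLp S 2 μ)
    (hcocycle : ∀ x, W x + N x = S x + E x)
    (hNE : IndepFun N E μ) :
    variance (fun x => W x + N x) μ = variance W μ - variance N μ + 2 * cov μ S N ∧
    variance (fun x => W x + N x) μ = variance S μ - variance E μ + 2 * cov μ E W := by
  have hWN : W + N = S + E := funext hcocycle
  rw [cov_eq_covariance hS hN, cov_eq_covariance hE hW, covariance_comm E W]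
  refine ⟨variance_add_eq_of_add_eq_add_of_indepFun hW hN hS hE hWN hNE, ?_⟩
  change Var[W + N; μ] = _
  rw [hWN]
  exact variance_add_eq_of_add_eq_add_of_indepFun hS hE hW hN hWN.symm hNE.symm

/-- Abstract cocycle variance identity for the increments along the four sides
of a rectangle in the stationary discrete Hammersley model. -/
theorem stmt13 {Ω : Type*} [MeasurableSpace Ω] (μ : Measure Ω) [IsProbabilityMeasure μ]
    (W N E S : Ω → ℝ)
    (hW : MemLp W 2 μ) (hN : MemLp N 2 μ) (hE : MemLp E 2 μ) (hS : MemLp S 2 μ)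
    (hcocycle : ∀ x, W x + N x = S x + E x)
    (hNE : IndepFun N E μ) (hWS : IndepFun W S μ) :
    variance (fun x => W x + N x) μ = variance W μ - variance N μ + 2 * cov μ S N ∧
    variance (fun x => W x + N x) μ = variance S μ - variance E μ + 2 * cov μ E W :=
  stmt13_general μ W N E S hW hN hE hS hcocycle hNE
end
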